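/- arXiv:2010.09243 — 2 statements merged into one kernel-verified Lean document; each statement's English description precedes it below -/
import Mathlib

section
/- Let (G^(1), M^(1)), …, (G^(m), M^(m)) be good admissible cocycles over the same data (K, ι, ξ, F). Define M⁰ i := [[0, F i],[1, 0]] and G⁰ i j := [[1, 0],[0, ξ i j]]. For each k = 1,…,m and all i, j write a^(k)_{i0}, a^(k)_{i1} for the (1,1) and (2,1) entries of M^(k) i and g^(k)_{ij,11}, g^(k)_{ij,21} for the (1,1) and (2,1) entries of G^(k) i j, and set K^(k)+ i j := (a^(k)_{i1})⁻¹·((a^(k)_{i1}·g^(k)_{ij,11} − a^(k)_{i0}·g^(k)_{ij,21})·Id + g^(k)_{ij,21}·M⁰ i) and K^(k)− i j := (ξ i j)·(a^(k)_{i1}·det(G^(k) i j))⁻¹·((a^(k)_{i1}·g^(k)_{ij,11} − a^(k)_{i0}·g^(k)_{ij,21})·Id − g^(k)_{ij,21}·M⁰ i). For integers n₁, …, n_m define G^[n] i j := (K^(1)(n₁) i j)^{|n₁|} · … · (K^(m)(n_m) i j)^{|n_m|} · G⁰ i j, where K^(k)(n_k) := K^(k)+ if n_k ≥ 0 and K^(k)(n_k)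 := K^(k)− if n_k < 0. Then every G^[n] i j is invertible, G^[n] i i = Id, (G^[n] i j)·(G^[n] j k) = G^[n] i k for all i, j, k, and M⁰ j = (ξ i j)·(G^[n] i j)⁻¹·(M⁰ i)·(G^[n] i j) for all i, j. That is, (G^[n], M⁰) is an admissible cocycle. -/
/-- The combinatorial data underlying admissible pairs on a double cover: a field `K`,
an index type `ι`, transition scalars `ξ i j` (nonzero, normalized, cocycle) and local
equations `F i` of the branch locus (transforming by `ξ²`, not squares in `K`). -/
structure AdmissibleData (K : Type*) [Field K] (ι : Type*) where
  ξ : ι → ι → K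
  F : ι → K
  ξ_ne : ∀ i j, ξ i j ≠ 0
  ξ_diag : ∀ i, ξ i i = 1
  ξ_mul : ∀ i j k, ξ i j * ξ j k = ξ i k
  F_transf : ∀ i j, F j = (ξ i j) ^ 2 * F i
  F_not_sq : ∀ i, ¬ ∃ c : K, c ^ 2 = F i

/-- An admissible cocycle over the data `D`: transition matrices `G i j` (invertible,
normalized, cocycle) together with trace-zero matrices `M i` squaring to `F i • Id` and
transforming by `M j = ξ i j • ((G i j)⁻¹ * M i * G i j)`. -/
structure AdmissibleCocycle {K : Type*} [Field K] {ι : Type*} (D : AdmissibleData K ι) where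
  G : ι → ι → Matrix (Fin 2) (Fin 2) K
  M : ι → Matrix (Fin 2) (Fin 2) K
  G_unit : ∀ i j, IsUnit (G i j)
  G_diag : ∀ i, G i i = 1
  G_mul : ∀ i j k, G i j * G j k = G i k
  M_trace : ∀ i, (M i).trace = 0
  M_sq : ∀ i, M i * M i = D.F i • (1 : Matrix (Fin 2) (Fin 2) K)
  M_transf : ∀ i j, M j = D.ξ i j • ((G i j)⁻¹ * M i * G i j)

/-- A cocycle is good if every `(2,1)` entry of `M i` is nonzero. -/
def AdmissibleCocycle.Good {K : Type*} [Field K] {ι : Type*} {D : AdmissibleData K ι}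
    (C : AdmissibleCocycle D) : Prop := ∀ i, C.M i 1 0 ≠ 0

/-!
For a good cocycle `(G, M)`, the matrix `frame i` with columns `e₁` and `M i e₁` is invertible and
conjugates `M i` into the companion matrix `M₀ i`, and `(frame i)⁻¹ * G i j * frame j` turns out
to be `K⁺ i j * G₀ i j`. So `K⁺` is a cocycle twisted by `G₀` (i.e. `K⁺ i j * G₀ i j` is a
cocycle) with values in the commutative algebras `K[M₀ i]`; so is `K⁻`, which is `ξ` times `K⁺`
of the dual cocycle `(G / det G, -M)`. Since `G₀ i j` conjugates `K[M₀ j]` into `K[M₀ i]`, such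
twisted cocycles form a monoid under pointwise multiplication, and `G^[n]` is one of them times
`G₀`. It intertwines `M₀` because `G₀` does and `K[M₀ i]` commutes with `M₀ i`.
-/

open scoped Algebra

section Cocycle

variable {ι R : Type*} [Monoid R]

structure IsCocycle (g : ι → ι → R) : Prop where
  diag : ∀ i, g i i = 1
  mul : ∀ i j l, g i j * g j l = g i l

namespace IsCocycle

variable {g : ι → ι → R}

theorem mul_swap (hg : IsCocycle g) (i j : ι) : g i j * g j i = 1 := by
  rw [hg.mul, hg.diag]

theorem isUnit (hg : IsCocycle g) (i j : ι) : IsUnit (g i j) :=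
  ⟨⟨g i j, g j i, hg.mul_swap i j, hg.mul_swap j i⟩, rfl⟩

theorem of_mul_eq_mul {G : ι → ι → R} {S : ι → R} (hG : IsCocycle G)
    (hS : ∀ i, IsUnit (S i)) (h : ∀ i j, S i * g i j = G i j * S j) : IsCocycle g where
  diag i := (hS i).mul_left_cancel (by rw [h, hG.diag, one_mul, mul_one])
  mul i j l := (hS i).mul_left_cancel (by rw [← mul_assoc, h, mul_assoc, h, ← mul_assoc, hG.mul, h])

end IsCocycle

def twistedCocycles (A : ι → Submonoid R) (hA : ∀ i, ∀ a ∈ A i, ∀ b ∈ A i, Commute a b)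
    (g : ι → ι → R) (hg : IsCocycle g) (hgA : ∀ i j, ∀ a ∈ A j, ∃ b ∈ A i, g i j * a = b * g i j) :
    Submonoid (ι → ι → R) where
  carrier := {X | (∀ i j, X i j ∈ A i) ∧ IsCocycle fun i j => X i j * g i j}
  one_mem' := ⟨fun i _ => (A i).one_mem, by simpa using hg⟩
  mul_mem' := by
    rintro X Y ⟨hXA, hX⟩ ⟨hYA, hY⟩
    refine ⟨fun i j => (A i).mul_mem (hXA i j) (hYA i j), fun i => ?_, fun i j l => ?_⟩
    · have hXi := hX.diag i
      have hYi := hY.diag i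
      simp only [hg.diag, mul_one] at hXi hYi ⊢
      rw [Pi.mul_apply, Pi.mul_apply, hXi, hYi, one_mul]
    obtain ⟨b, hbA, hb⟩ := hgA i j _ (hXA j l)
    have hb' (z : R) : g i j * (X j l * z) = b * (g i j * z) := by rw [← mul_assoc, hb, mul_assoc]
    have hXm : X i j * g i j * (X j l * g j l) = X i l * g i l := hX.mul i j l
    have hYm : Y i j * g i j * (Y j l * g j l) = Y i l * g i l := hY.mul i j l
    have hXb : X i j * (b * g i l) = X i l * g i l := by
      rw [← hXm, ← hg.mul i j l]
      simp only [mul_assoc, hb']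
    have hYb : Commute (Y i j) b := hA i _ (hYA i j) _ hbA
    have hXbY : Commute (X i j * b) (Y i l) := hA i _ ((A i).mul_mem (hXA i j) hbA) _ (hYA i l)
    show X i j * Y i j * g i j * (X j l * Y j l * g j l) = X i l * Y i l * g i l
    calc X i j * Y i j * g i j * (X j l * Y j l * g j l)
        = X i j * (b * (Y i j * g i j * (Y j l * g j l))) := by
          simp only [mul_assoc, hb', hYb.left_comm]
      _ = Y i l * (X i j * (b * g i l)) := by
          rw [hYm, ← mul_assoc, ← mul_assoc, hXbY.eq]
          simp only [mul_assoc]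
      _ = X i l * Y i l * g i l := by
          rw [hXb, ← mul_assoc, (hA i _ (hYA i l) _ (hXA i l)).eq]

end Cocycle

theorem Algebra.commute_of_mem_adjoin_singleton {R A : Type*} [CommSemiring R] [Semiring A]
    [Algebra R A] {a b c : A} (hb : b ∈ R[a]) (hc : c ∈ R[a]) : Commute b c :=
  commute_of_mem_adjoin_singleton_of_commute hc (commute_of_mem_adjoin_self hb).symm

theorem Matrix.eq_smul_inv_mul_mul_iff {n K : Type*} [Fintype n] [DecidableEq n] [Field K]
    {A B C : Matrix n n K} (hA : IsUnit A) (c : K) :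
    B = c • (A⁻¹ * C * A) ↔ A * B = c • (C * A) := by
  rw [isUnit_iff_isUnit_det] at hA
  constructor
  · rintro rfl
    rw [mul_smul_comm, ← mul_assoc, ← mul_assoc, mul_nonsing_inv A hA, one_mul]
  · intro h
    rw [← nonsing_inv_mul_cancel_left A B hA, h, mul_smul_comm, mul_assoc]

namespace AdmissibleData

variable {K ι : Type*} [Field K] (D : AdmissibleData K ι)

def M₀ (i : ι) : Matrix (Fin 2) (Fin 2) K := !![0, D.F i; 1, 0]

def G₀ (i j : ι) : Matrix (Fin 2) (Fin 2) K := !![1, 0; 0, D.ξ i j]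

theorem isCocycle_G₀ : IsCocycle D.G₀ where
  diag i := by simp [G₀, D.ξ_diag, Matrix.one_fin_two]
  mul i j l := by simp [G₀, ← D.ξ_mul i j l]

theorem G₀_mul_M₀ (i j : ι) : D.G₀ i j * D.M₀ j = D.ξ i j • (D.M₀ i * D.G₀ i j) := by
  ext a b; fin_cases a <;> fin_cases b <;> simp [G₀, M₀, D.F_transf i j]; ring

theorem exists_G₀_mul_eq_mul_G₀ (i j : ι) {a : Matrix (Fin 2) (Fin 2) K} (ha : a ∈ K[D.M₀ j]) :
    ∃ b ∈ K[D.M₀ i], D.G₀ i j * a = b * D.G₀ i j := by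
  induction ha using Algebra.adjoin_induction with
  | mem x hx =>
    rw [Set.mem_singleton_iff.mp hx]
    exact ⟨D.ξ i j • D.M₀ i, Subalgebra.smul_mem _ (Algebra.self_mem_adjoin_singleton K _) _,
      by rw [G₀_mul_M₀, smul_mul_assoc]⟩
  | algebraMap r =>
    exact ⟨algebraMap K _ r, Subalgebra.algebraMap_mem _ r, (Algebra.commutes r _).symm⟩
  | add x y _ _ hx hy =>
    obtain ⟨b, hb, hxb⟩ := hx
    obtain ⟨c, hc, hyc⟩ := hy
    exact ⟨b + c, add_mem hb hc, by rw [mul_add, add_mul, hxb, hyc]⟩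
  | mul x y _ _ hx hy =>
    obtain ⟨b, hb, hxb⟩ := hx
    obtain ⟨c, hc, hyc⟩ := hy
    exact ⟨b * c, mul_mem hb hc, by rw [← mul_assoc, hxb, mul_assoc, hyc, mul_assoc]⟩

def twistedCocycles : Submonoid (ι → ι → Matrix (Fin 2) (Fin 2) K) :=
  _root_.twistedCocycles (fun i => (K[D.M₀ i]).toSubmonoid)
    (fun _ _ ha _ hb => Algebra.commute_of_mem_adjoin_singleton ha hb) D.G₀ D.isCocycle_G₀
    fun i j _ ha => D.exists_G₀_mul_eq_mul_G₀ i j ha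

theorem algebraMap_ξ_mem_twistedCocycles :
    (fun i j => algebraMap K (Matrix (Fin 2) (Fin 2) K) (D.ξ i j)) ∈ D.twistedCocycles := by
  refine ⟨fun i j => Subalgebra.algebraMap_mem _ _, fun i => ?_, fun i j l => ?_⟩
  · simp [D.ξ_diag, D.isCocycle_G₀.diag]
  · show algebraMap K _ (D.ξ i j) * D.G₀ i j * (algebraMap K _ (D.ξ j l) * D.G₀ j l)
      = algebraMap K _ (D.ξ i l) * D.G₀ i l
    rw [← D.isCocycle_G₀.mul i j l, ← D.ξ_mul i j l, map_mul]
    simp only [Algebra.algebraMap_eq_smul_one, smul_mul_assoc, one_mul, mul_smul_comm, smul_smul]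

theorem M₀_eq_smul_of_mem_twistedCocycles {X : ι → ι → Matrix (Fin 2) (Fin 2) K}
    (hX : X ∈ D.twistedCocycles) (i j : ι) :
    D.M₀ j = D.ξ i j • ((X i j * D.G₀ i j)⁻¹ * D.M₀ i * (X i j * D.G₀ i j)) := by
  rw [Matrix.eq_smul_inv_mul_mul_iff (hX.2.isUnit i j), mul_assoc, G₀_mul_M₀, mul_smul_comm,
    ← mul_assoc, ← mul_assoc,
    (Algebra.commute_of_mem_adjoin_singleton (hX.1 i j) (Algebra.self_mem_adjoin_singleton K _)).eq]

end AdmissibleData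

namespace AdmissibleCocycle

variable {K ι : Type*} [Field K] {D : AdmissibleData K ι} (C : AdmissibleCocycle D)

theorem isCocycle_G : IsCocycle C.G := ⟨C.G_diag, C.G_mul⟩

theorem G_mul_M (i j : ι) : C.G i j * C.M j = D.ξ i j • (C.M i * C.G i j) :=
  (Matrix.eq_smul_inv_mul_mul_iff (C.G_unit i j) _).mp (C.M_transf i j)

theorem M_one_one (i : ι) : C.M i 1 1 = -C.M i 0 0 := by
  have h := C.M_trace i
  rw [Matrix.trace_fin_two] at h
  linear_combination h

theorem M_sq_zero_zero (i : ι) : C.M i 0 0 ^ 2 + C.M i 0 1 * C.M i 1 0 = D.F i := by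
  simpa [sq, Matrix.mul_apply] using congrFun (congrFun (C.M_sq i) 0) 0

def kPlus (i j : ι) : Matrix (Fin 2) (Fin 2) K :=
  (C.M i 1 0)⁻¹ • ((C.M i 1 0 * C.G i j 0 0 - C.M i 0 0 * C.G i j 1 0) • 1 + C.G i j 1 0 • D.M₀ i)

def kMinus (i j : ι) : Matrix (Fin 2) (Fin 2) K :=
  (D.ξ i j * (C.M i 1 0 * (C.G i j).det)⁻¹) •
    ((C.M i 1 0 * C.G i j 0 0 - C.M i 0 0 * C.G i j 1 0) • 1 - C.G i j 1 0 • D.M₀ i)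

def frame (i : ι) : Matrix (Fin 2) (Fin 2) K := !![1, C.M i 0 0; 0, C.M i 1 0]

theorem isUnit_frame {C : AdmissibleCocycle D} (hC : C.Good) (i : ι) : IsUnit (C.frame i) := by
  simpa [Matrix.isUnit_iff_isUnit_det, frame] using hC i

theorem frame_mul_kPlus_mul_G₀ {C : AdmissibleCocycle D} (hC : C.Good) (i j : ι) :
    C.frame i * (C.kPlus i j * D.G₀ i j) = C.G i j * C.frame j := by
  have h00 := congrFun (congrFun (C.G_mul_M i j) 0) 0
  have h10 := congrFun (congrFun (C.G_mul_M i j) 1) 0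
  simp only [Matrix.mul_apply, Fin.sum_univ_two, Matrix.smul_apply, smul_eq_mul, C.M_one_one,
    neg_mul] at h00 h10
  have hF := C.M_sq_zero_zero i
  have ha := hC i
  ext a b; fin_cases a <;> fin_cases b <;>
    simp [frame, kPlus, AdmissibleData.M₀, AdmissibleData.G₀, Matrix.mul_apply]
  all_goals field_simp
  · ring
  · linear_combination (-C.M i 1 0) * h00 - D.ξ i j * C.G i j 1 0 * hF
  · linear_combination -h10

theorem kPlus_mem_adjoin (i j : ι) : C.kPlus i j ∈ K[D.M₀ i] :=
  Subalgebra.smul_mem _ (add_mem (Subalgebra.smul_mem _ (one_mem _) _)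
    (Subalgebra.smul_mem _ (Algebra.self_mem_adjoin_singleton K _) _)) _

theorem kPlus_mem_twistedCocycles {C : AdmissibleCocycle D} (hC : C.Good) :
    C.kPlus ∈ D.twistedCocycles :=
  ⟨C.kPlus_mem_adjoin, .of_mul_eq_mul C.isCocycle_G (isUnit_frame hC) (frame_mul_kPlus_mul_G₀ hC)⟩

theorem det_G_ne_zero (i j : ι) : (C.G i j).det ≠ 0 :=
  ((Matrix.isUnit_iff_isUnit_det _).mp (C.G_unit i j)).ne_zero

def dual : AdmissibleCocycle D where
  G i j := (C.G i j).det⁻¹ • C.G i j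
  M i := -C.M i
  G_unit i j := by
    simpa [Matrix.isUnit_iff_isUnit_det, Matrix.det_smul] using C.det_G_ne_zero i j
  G_diag i := by simp [C.G_diag]
  G_mul i j l := by
    rw [smul_mul_smul_comm, C.G_mul, ← mul_inv, ← Matrix.det_mul, C.G_mul]
  M_trace i := by simp [C.M_trace]
  M_sq i := by simp [C.M_sq]
  M_transf i j := by
    rw [Matrix.eq_smul_inv_mul_mul_iff, smul_mul_assoc, mul_smul_comm, mul_neg, C.G_mul_M,
      neg_mul, smul_neg, smul_neg, smul_neg, smul_comm]
    simpa [Matrix.isUnit_iff_isUnit_det, Matrix.det_smul] using C.det_G_ne_zero i j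

theorem Good.dual {C : AdmissibleCocycle D} (hC : C.Good) : C.dual.Good :=
  fun i => by simpa [AdmissibleCocycle.dual] using hC i

theorem kMinus_eq_smul_dual_kPlus (i j : ι) : C.kMinus i j = D.ξ i j • C.dual.kPlus i j := by
  simp only [kMinus, kPlus, dual, Matrix.smul_apply, Matrix.neg_apply, smul_eq_mul]
  module

theorem kMinus_mem_twistedCocycles {C : AdmissibleCocycle D} (hC : C.Good) :
    C.kMinus ∈ D.twistedCocycles := by
  have h := mul_mem D.algebraMap_ξ_mem_twistedCocycles (kPlus_mem_twistedCocycles hC.dual)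
  convert h using 1
  ext i j : 2
  rw [kMinus_eq_smul_dual_kPlus, Algebra.smul_def]
  rfl

end AdmissibleCocycle

/-- Theorem on the group structure of `Pic` in transition-function form.
Given `m` good admissible cocycles `(G^(k), M^(k))` over the same data and integers
`n₁, …, n_m`, the matrices
`G^[n] i j := (K^(1)(n₁) i j)^{|n₁|} ⋯ (K^(m)(n_m) i j)^{|n_m|} * G⁰ i j`
(with `K^(k)+`, `K^(k)−` as displayed, `M⁰ i = !![0, F i; 1, 0]`,
`G⁰ i j = !![1, 0; 0, ξ i j]`) are invertible, form a normalized cocycle, and intertwine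
`M⁰`; i.e. `(G^[n], M⁰)` is an admissible cocycle. -/
theorem stmt5 {K : Type*} [Field K] {ι : Type*} (D : AdmissibleData K ι)
    (m : ℕ) (C : Fin m → AdmissibleCocycle D) (hC : ∀ k, (C k).Good)
    (n : Fin m → ℤ)
    (M₀ : ι → Matrix (Fin 2) (Fin 2) K) (hM₀ : ∀ i, M₀ i = !![0, D.F i; 1, 0])
    (G₀ : ι → ι → Matrix (Fin 2) (Fin 2) K) (hG₀ : ∀ i j, G₀ i j = !![1, 0; 0, D.ξ i j])
    (Kp Km : Fin m → ι → ι → Matrix (Fin 2) (Fin 2) K)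
    (hKp : ∀ k i j, Kp k i j =
      ((C k).M i 1 0)⁻¹ •
        (((C k).M i 1 0 * (C k).G i j 0 0 - (C k).M i 0 0 * (C k).G i j 1 0) •
            (1 : Matrix (Fin 2) (Fin 2) K) +
          ((C k).G i j 1 0) • M₀ i))
    (hKm : ∀ k i j, Km k i j =
      (D.ξ i j * ((C k).M i 1 0 * ((C k).G i j).det)⁻¹) •
        (((C k).M i 1 0 * (C k).G i j 0 0 - (C k).M i 0 0 * (C k).G i j 1 0) •
            (1 : Matrix (Fin 2) (Fin 2) K) -
          ((C k).G i j 1 0) • M₀ i))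
    (Gn : ι → ι → Matrix (Fin 2) (Fin 2) K)
    (hGn : ∀ i j, Gn i j =
      (((List.finRange m).map fun k =>
          (if 0 ≤ n k then Kp k i j else Km k i j) ^ (n k).natAbs)).prod * G₀ i j) :
    (∀ i j, IsUnit (Gn i j)) ∧
    (∀ i, Gn i i = 1) ∧
    (∀ i j k, Gn i j * Gn j k = Gn i k) ∧
    (∀ i j, M₀ j = D.ξ i j • ((Gn i j)⁻¹ * M₀ i * Gn i j)) := by
  obtain rfl : M₀ = D.M₀ := funext hM₀
  obtain rfl : G₀ = D.G₀ := funext₂ hG₀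
  obtain rfl : Kp = fun k => (C k).kPlus := funext₃ hKp
  obtain rfl : Km = fun k => (C k).kMinus := funext₃ hKm
  set P := ((List.finRange m).map fun k =>
    (fun i j => if 0 ≤ n k then (C k).kPlus i j else (C k).kMinus i j) ^ (n k).natAbs).prod
  have hP : P ∈ D.twistedCocycles := by
    refine Submonoid.list_prod_mem _ fun X hX => ?_
    obtain ⟨k, -, rfl⟩ := List.mem_map.mp hX
    refine pow_mem ?_ _
    split_ifs
    · exact (C k).kPlus_mem_twistedCocycles (hC k)
    · exact (C k).kMinus_mem_twistedCocycles (hC k)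
  obtain rfl : Gn = fun i j => P i j * D.G₀ i j := by
    ext1 i; ext1 j
    simp only [hGn, P, Pi.list_prod_apply, List.map_map, Function.comp_def, Pi.pow_apply]
  exact ⟨hP.2.isUnit, hP.2.diag, hP.2.mul, D.M₀_eq_smul_of_mem_twistedCocycles hP⟩
end

section
/- Let K := ℂ(x) be the field of rational functions over ℂ in the variable x, and let b, c ∈ ℂ satisfy 4·b·c = −1 (so b ≠ 0 and c ≠ 0). Set A := [[c + b·x, (b·x − c)²],[1, c + b·x]] and G⁰ := [[1, 0],[0, x⁻¹]], 2×2 matrices over K. For an integer n ≥ 1 define Q₁′ := [[1, −(b·x − c)],[−(bⁿxⁿ − cⁿ)/(2cⁿ·(b·x − c)), (bⁿxⁿ + cⁿ)/(2cⁿ)]] and Q₂ := [[1, b − c·x⁻¹],[0, 1]]. Then: (i) all entries of Q₁′ lie in the polynomial subring ℂ[x] ⊂ K and det Q₁′ = 1; (ii) all entries of Q₂ and of Q₂⁻¹ lie in the subring ℂ[x⁻¹] ⊂ K of polynomials in x⁻¹; and (iii) Q₁′ · Aⁿ · G⁰ · Q₂ = [[(2c)ⁿ, 0],[0, (2b)ⁿ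 · x^{n−1}]]. -/
/-!
Write `a = b·x`. The matrix `A = !![c + a, (a - c)²; 1, c + a]` has eigenvalues `2a` and `2c`,
which gives a closed form for `Aⁿ`. The row operations `Q₁′` turn `Aⁿ` into the upper triangular
matrix `!![(2c)ⁿ, -(a - c)(2c)ⁿ; 0, (2a)ⁿ]`; `Q₁′` is polynomial in `x` because
`(aⁿ - cⁿ)/(a - c)` is a geometric sum. After the twist by `G⁰`, the column operation `Q₂` clears
the remaining off-diagonal entry.
-/

/-- `f ∈ ℂ[x] ⊂ ℂ(x)`: `f` is a polynomial in `x`. -/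
def MemPolyX (f : RatFunc ℂ) : Prop :=
  ∃ p : Polynomial ℂ, f = algebraMap (Polynomial ℂ) (RatFunc ℂ) p

/-- `f ∈ ℂ[x⁻¹] ⊂ ℂ(x)`: `f` is a polynomial in `x⁻¹`. -/
def MemPolyXInv (f : RatFunc ℂ) : Prop :=
  ∃ p : Polynomial ℂ, f = Polynomial.aeval (RatFunc.X : RatFunc ℂ)⁻¹ p

section Field

variable {K : Type*} [Field K]

def transitionMatrix (a c : K) : Matrix (Fin 2) (Fin 2) K :=
  !![c + a, (a - c) ^ 2; 1, c + a]

def leftFrameChange (n : ℕ) (a c : K) : Matrix (Fin 2) (Fin 2) K :=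
  !![1, -(a - c); -((a ^ n - c ^ n) / (2 * c ^ n * (a - c))), (a ^ n + c ^ n) / (2 * c ^ n)]

theorem transitionMatrix_pow {a c : K} (h2 : (2 : K) ≠ 0) (hac : a ≠ c) (n : ℕ) :
    transitionMatrix a c ^ n =
      !![((2 * a) ^ n + (2 * c) ^ n) / 2, (a - c) * (((2 * a) ^ n - (2 * c) ^ n) / 2);
         ((2 * a) ^ n - (2 * c) ^ n) / (2 * (a - c)), ((2 * a) ^ n + (2 * c) ^ n) / 2] := by
  have hac' : a - c ≠ 0 := sub_ne_zero.2 hac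
  induction n with
  | zero => simp [Matrix.one_fin_two, one_add_one_eq_two, div_self h2]
  | succ m ih =>
    rw [pow_succ, ih, transitionMatrix, Matrix.mul_fin_two]
    ext i j
    fin_cases i <;> fin_cases j <;>
      simp only [Matrix.of_apply, Matrix.cons_val', Matrix.cons_val_zero, Matrix.cons_val_one,
        Matrix.cons_val_fin_one, Fin.zero_eta, Fin.mk_one, Fin.isValue] <;>
      field_simp <;> ring

theorem leftFrameChange_mul_transitionMatrix_pow {a c : K} (h2 : (2 : K) ≠ 0) (hc : c ≠ 0)
    (hac : a ≠ c) (n : ℕ) :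
    leftFrameChange n a c * transitionMatrix a c ^ n =
      !![(2 * c) ^ n, -(a - c) * (2 * c) ^ n; 0, (2 * a) ^ n] := by
  have hac' : a - c ≠ 0 := sub_ne_zero.2 hac
  rw [transitionMatrix_pow h2 hac, leftFrameChange, Matrix.mul_fin_two]
  ext i j
  fin_cases i <;> fin_cases j <;>
    simp only [Matrix.of_apply, Matrix.cons_val', Matrix.cons_val_zero, Matrix.cons_val_one,
      Matrix.cons_val_fin_one, Fin.zero_eta, Fin.mk_one, Fin.isValue] <;>
    field_simp <;> ring

theorem det_leftFrameChange {a c : K} (h2 : (2 : K) ≠ 0) (hc : c ≠ 0) (hac : a ≠ c) (n : ℕ) :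
    (leftFrameChange n a c).det = 1 := by
  have hac' : a - c ≠ 0 := sub_ne_zero.2 hac
  rw [leftFrameChange, Matrix.det_fin_two_of]
  field_simp
  ring

theorem leftFrameChange_apply_mem {S : Type*} [SetLike S K] [SubringClass S K] {s : S}
    {a c : K} (ha : a ∈ s) (hc : c ∈ s) (hac : a ≠ c) {n : ℕ} (hinv : (2 * c ^ n)⁻¹ ∈ s)
    (i j : Fin 2) : leftFrameChange n a c i j ∈ s := by
  have hac' : a - c ≠ 0 := sub_ne_zero.2 hac
  have hgeom : (a ^ n - c ^ n) / (2 * c ^ n * (a - c)) =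
      (2 * c ^ n)⁻¹ * ∑ k ∈ Finset.range n, a ^ k * c ^ (n - 1 - k) := by
    rw [← geom_sum₂_mul]
    field_simp
  fin_cases i <;> fin_cases j <;>
    simp only [leftFrameChange, Matrix.of_apply, Matrix.cons_val', Matrix.cons_val_zero,
      Matrix.cons_val_one, Matrix.cons_val_fin_one, Fin.zero_eta, Fin.mk_one, Fin.isValue]
  · exact one_mem s
  · exact neg_mem (sub_mem ha hc)
  · rw [hgeom]
    exact neg_mem <| mul_mem hinv <| sum_mem fun k _ => mul_mem (pow_mem ha k) (pow_mem hc _)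
  · rw [div_eq_inv_mul]
    exact mul_mem hinv (add_mem (pow_mem ha n) (pow_mem hc n))

theorem triangular_mul_diagonal_mul_unitriangular {b c x : K} (hx : x ≠ 0) {n : ℕ} (hn : 1 ≤ n)
    (q : K) :
    !![q, -(b * x - c) * q; 0, (2 * (b * x)) ^ n] * !![1, 0; 0, x⁻¹] * !![1, b - c * x⁻¹; 0, 1] =
      !![q, 0; 0, (2 * b) ^ n * x ^ (n - 1)] := by
  obtain ⟨m, rfl⟩ := Nat.exists_eq_add_of_le' hn
  rw [Matrix.mul_fin_two, Matrix.mul_fin_two, Nat.add_sub_cancel]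
  ext i j
  fin_cases i <;> fin_cases j <;>
    simp only [Matrix.of_apply, Matrix.cons_val', Matrix.cons_val_zero, Matrix.cons_val_one,
      Matrix.cons_val_fin_one, Fin.zero_eta, Fin.mk_one, Fin.isValue] <;>
    field_simp <;> ring

end Field

theorem inv_upperUnitriangular {R : Type*} [CommRing R] (t : R) :
    (!![1, t; 0, 1] : Matrix (Fin 2) (Fin 2) R)⁻¹ = !![1, -t; 0, 1] :=
  Matrix.inv_eq_left_inv (by simp [Matrix.one_fin_two])

theorem upperUnitriangular_apply_mem {R S : Type*} [Ring R] [SetLike S R] [SubringClass S R]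
    {s : S} {t : R} (ht : t ∈ s) (i j : Fin 2) :
    (!![1, t; 0, 1] : Matrix (Fin 2) (Fin 2) R) i j ∈ s := by
  fin_cases i <;> fin_cases j
  exacts [one_mem s, ht, zero_mem s, one_mem s]

theorem RatFunc.C_mul_X_ne_C {K : Type*} [Field K] (b : K) {c : K} (hc : c ≠ 0) :
    RatFunc.C b * RatFunc.X ≠ RatFunc.C c := by
  rw [← RatFunc.algebraMap_C, ← RatFunc.algebraMap_C, ← RatFunc.algebraMap_X, ← map_mul,
    (RatFunc.algebraMap_injective K).ne_iff]
  intro h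
  simpa [eq_comm, hc] using congrArg (Polynomial.coeff · 0) h

theorem memPolyX_iff (f : RatFunc ℂ) :
    MemPolyX f ↔ f ∈ (algebraMap (Polynomial ℂ) (RatFunc ℂ)).range :=
  exists_congr fun _ => eq_comm

theorem memPolyXInv_iff (f : RatFunc ℂ) :
    MemPolyXInv f ↔ f ∈ (Polynomial.aeval (R := ℂ) (RatFunc.X : RatFunc ℂ)⁻¹).range :=
  exists_congr fun _ => eq_comm

/-- explicit diagonalization in the proof of Proposition 7.1.  In
`K = ℂ(x)`, with `4bc = −1`, `A := !![C c + C b·X, (C b·X − C c)²; 1, C c + C b·X]`,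
`G⁰ := !![1, 0; 0, X⁻¹]`, and for `n ≥ 1` the matrices `Q₁′`, `Q₂` as displayed:
`Q₁′` has polynomial entries and determinant `1`, `Q₂` and `Q₂⁻¹` have entries polynomial in
`x⁻¹`, and `Q₁′ · Aⁿ · G⁰ · Q₂ = !![(2c)ⁿ, 0; 0, (2b)ⁿ·x^{n−1}]`. -/
theorem stmt11 (b c : ℂ) (h : 4 * b * c = -1) (n : ℕ) (hn : 1 ≤ n)
    (A G₀ Q₁ Q₂ : Matrix (Fin 2) (Fin 2) (RatFunc ℂ))
    (hA : A = !![RatFunc.C c + RatFunc.C b * RatFunc.X,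
        (RatFunc.C b * RatFunc.X - RatFunc.C c) ^ 2;
        1, RatFunc.C c + RatFunc.C b * RatFunc.X])
    (hG₀ : G₀ = !![1, 0; 0, (RatFunc.X : RatFunc ℂ)⁻¹])
    (hQ₁ : Q₁ = !![1, -(RatFunc.C b * RatFunc.X - RatFunc.C c);
        -(((RatFunc.C b) ^ n * RatFunc.X ^ n - (RatFunc.C c) ^ n) /
          (2 * (RatFunc.C c) ^ n * (RatFunc.C b * RatFunc.X - RatFunc.C c))),
        ((RatFunc.C b) ^ n * RatFunc.X ^ n + (RatFunc.C c) ^ n) / (2 * (RatFunc.C c) ^ n)])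
    (hQ₂ : Q₂ = !![1, RatFunc.C b - RatFunc.C c * (RatFunc.X : RatFunc ℂ)⁻¹; 0, 1]) :
    (∀ i j, MemPolyX (Q₁ i j)) ∧ Q₁.det = 1 ∧
    (∀ i j, MemPolyXInv (Q₂ i j)) ∧ (∀ i j, MemPolyXInv (Q₂⁻¹ i j)) ∧
    Q₁ * A ^ n * G₀ * Q₂
      = !![(2 * RatFunc.C c) ^ n, 0;
           0, (2 * RatFunc.C b) ^ n * RatFunc.X ^ (n - 1)] := by
  have hc : c ≠ 0 := by rintro rfl; simp at h
  have hC : RatFunc.C c ≠ 0 := (map_ne_zero _).2 hc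
  have hac := RatFunc.C_mul_X_ne_C b hc
  have h2 : (2 : RatFunc ℂ) ≠ 0 := two_ne_zero
  have hA' : A = transitionMatrix (RatFunc.C b * RatFunc.X) (RatFunc.C c) := hA
  have hQ₁' : Q₁ = leftFrameChange n (RatFunc.C b * RatFunc.X) (RatFunc.C c) := by
    rw [hQ₁, leftFrameChange, mul_pow]
  have ht : RatFunc.C b - RatFunc.C c * RatFunc.X⁻¹ ∈
      (Polynomial.aeval (R := ℂ) (RatFunc.X : RatFunc ℂ)⁻¹).range :=
    ⟨Polynomial.C b - Polynomial.C c * Polynomial.X, by simp [RatFunc.algebraMap_eq_C]⟩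
  refine ⟨fun i j => ?_, ?_, fun i j => ?_, fun i j => ?_, ?_⟩
  · rw [hQ₁', memPolyX_iff]
    have hC_mem (z : ℂ) : RatFunc.C z ∈ (algebraMap (Polynomial ℂ) (RatFunc ℂ)).range :=
      ⟨_, RatFunc.algebraMap_C z⟩
    refine leftFrameChange_apply_mem (mul_mem (hC_mem b) ⟨_, RatFunc.algebraMap_X⟩) (hC_mem c)
      hac ?_ i j
    simpa [map_ofNat] using hC_mem (2 * c ^ n)⁻¹
  · rw [hQ₁', det_leftFrameChange h2 hC hac]
  · rw [hQ₂, memPolyXInv_iff]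
    exact upperUnitriangular_apply_mem ht i j
  · rw [hQ₂, inv_upperUnitriangular, memPolyXInv_iff]
    exact upperUnitriangular_apply_mem (neg_mem ht) i j
  · rw [hA', hQ₁', hG₀, hQ₂, leftFrameChange_mul_transitionMatrix_pow h2 hC hac,
      triangular_mul_diagonal_mul_unitriangular RatFunc.X_ne_zero hn]
end
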